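/- Fix an integer K ≥ 1, γ > 0, and σ > 0, and let G_l be as defined. Then for any reals ξ₁ ≥ ξ₂ ≥ … ≥ ξ_K, the determinant of the K×K matrix [G_l(ξ_j)] (rows indexed by l = 0, …, K−1, columns by j = 1, …, K) equals ( G₀(ξ₁)·⋯·G₀(ξ_K) / ( σ^{K(K−1)} (e^γ − 1)^{K(K−1)/2} ) ) · ∏_{1 ≤ j < i ≤ K} (ξ_i − ξ_j). -/

import Mathlib

open MeasureTheory Filter Set
open scoped Topology

/-- `G_l(ξ) = ((e^γ − 1)/(2π)) ∫_ℝ exp(−i t ξ (e^γ − 1) − t² σ² (e^γ − 1)²/2) (i t)^l dt`. -/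
noncomputable def Gfun (γ σ : ℝ) (l : ℕ) (ξ : ℝ) : ℂ :=
  (((Real.exp γ - 1)/(2*Real.pi) : ℝ) : ℂ) *
    ∫ t : ℝ,
      Complex.exp (-Complex.I * ((t*ξ*(Real.exp γ - 1) : ℝ) : ℂ)
          - ((t^2*σ^2*(Real.exp γ - 1)^2/2 : ℝ) : ℂ)) *
        (Complex.I * (t : ℂ))^l

open Polynomial Complex
open scoped FourierTransform

/-! Differentiating under the integral sign, `G_l' = -(e^γ - 1) G_{l+1}`, and `G₀` is a Gaussian
of variance `σ²`. Hence `G_l = G₀ · He_l / ((e^γ - 1) σ²)^l` with `He_l` the monic Hermite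
polynomial of variance `σ²`, so `[G_l(ξ_j)]` is the matrix `[He_l(ξ_j)]` rescaled along rows and
columns, and the determinant of the latter is the Vandermonde determinant of the `ξ_j`. -/

/-- For `c > 0`, `hermiteVar c n x = c^(n/2) He_n(x / √c)` with `He_n = Polynomial.hermite n`:
the Hermite polynomials for the Gaussian of variance `c`. -/
noncomputable def hermiteVar (c : ℝ) : ℕ → ℝ[X]
  | 0 => 1
  | n + 1 => X * hermiteVar c n - c • derivative (hermiteVar c n)

theorem monic_hermiteVar (c : ℝ) (n : ℕ) : (hermiteVar c n).Monic := by
  induction n with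
  | zero => exact monic_one
  | succ n ih =>
    have hlt : (c • derivative (hermiteVar c n)).degree < (X * hermiteVar c n).degree :=
      calc (c • derivative (hermiteVar c n)).degree
          ≤ (derivative (hermiteVar c n)).degree := degree_smul_le _ _
        _ < (hermiteVar c n).degree := degree_derivative_lt ih.ne_zero
        _ < (X * hermiteVar c n).degree := by
          rw [mul_comm]
          exact degree_lt_degree_mul_X ih.ne_zero
    exact (monic_X.mul ih).sub_of_left hlt

theorem natDegree_hermiteVar (c : ℝ) (n : ℕ) : (hermiteVar c n).natDegree = n := by
  induction n with
  | zero => exact natDegree_one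
  | succ n ih =>
    have hX : (X * hermiteVar c n).natDegree = n + 1 := by
      rw [natDegree_X_mul (monic_hermiteVar c n).ne_zero, ih]
    have hD : (c • derivative (hermiteVar c n)).natDegree < n + 1 :=
      calc (c • derivative (hermiteVar c n)).natDegree
          ≤ (derivative (hermiteVar c n)).natDegree := natDegree_smul_le _ _
        _ ≤ n - 1 := (natDegree_derivative_le _).trans_eq (by rw [ih])
        _ < n + 1 := by omega
    rw [hermiteVar, natDegree_sub_eq_left_of_natDegree_lt (hX ▸ hD), hX]

theorem Matrix.det_mul_eval_of_monic {R : Type*} [CommRing R] {n : ℕ} (c : Fin n → R)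
    (p : Fin n → R[X]) (hdeg : ∀ i, (p i).natDegree = i) (hmonic : ∀ i, (p i).Monic)
    (x : Fin n → R) :
    (Matrix.of fun i j => c i * (p i).eval (x j)).det =
      (∏ i, c i) * ∏ i, ∏ j ∈ Finset.Ioi i, (x j - x i) := by
  refine (Matrix.det_mul_column c (Matrix.of fun i j => (p i).eval (x j))).trans ?_
  rw [← Matrix.det_vandermonde, ← Matrix.det_transpose,
    Matrix.det_eval_matrixOfPolynomials_eq_det_vandermonde x p hdeg hmonic]
  rfl

theorem Finset.prod_filter_lt_eq_prod_Ioi {M : Type*} [CommMonoid M] {n : ℕ}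
    (f : Fin n → Fin n → M) :
    ∏ p ∈ Finset.univ.filter (fun p : Fin n × Fin n => p.1 < p.2), f p.1 p.2 =
      ∏ i, ∏ j ∈ Finset.Ioi i, f i j := by
  rw [Finset.prod_filter, ← Finset.univ_product_univ, Finset.prod_product]
  refine Finset.prod_congr rfl fun i _ => ?_
  rw [← Finset.prod_filter]
  exact Finset.prod_congr (by ext j; simp) fun j _ => rfl

theorem Fin.prod_pow_val {M : Type*} [CommMonoid M] (r : M) (n : ℕ) :
    ∏ i : Fin n, r ^ (i : ℕ) = r ^ (n * (n - 1) / 2) := by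
  rw [Finset.prod_pow_eq_pow_sum, Fin.sum_univ_eq_sum_range (fun i => i), Finset.sum_range_id]

theorem hasDerivAt_hermiteVar_mul_gaussian {c : ℝ} (hc : c ≠ 0) (n : ℕ) (x : ℝ) :
    HasDerivAt (fun y => (hermiteVar c n).eval y * Real.exp (-(y ^ 2 / (2 * c))))
      (-((hermiteVar c (n + 1)).eval x * Real.exp (-(x ^ 2 / (2 * c)))) / c) x := by
  have hg : HasDerivAt (fun y => Real.exp (-(y ^ 2 / (2 * c))))
      (Real.exp (-(x ^ 2 / (2 * c))) * -(2 * x ^ 1 / (2 * c))) x := by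
    simpa using ((hasDerivAt_pow 2 x).div_const (2 * c)).neg.exp
  refine ((Polynomial.hasDerivAt (hermiteVar c n) x).mul hg).congr_deriv ?_
  simp only [hermiteVar, eval_sub, eval_mul, eval_X, eval_smul, smul_eq_mul]
  field_simp
  ring

theorem Real.exp_sub_one_ne_zero {x : ℝ} (hx : x ≠ 0) : Real.exp x - 1 ≠ 0 :=
  sub_ne_zero.mpr ((Real.exp_eq_one_iff x).not.mpr hx)

noncomputable def gaussianMonomial (b : ℝ) (l : ℕ) (t : ℝ) : ℂ :=
  cexp (-(b * t ^ 2 : ℝ)) * (I * t) ^ l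

theorem gaussianMonomial_succ (b : ℝ) (l : ℕ) (t : ℝ) :
    gaussianMonomial b (l + 1) t = I * t * gaussianMonomial b l t := by
  rw [gaussianMonomial, gaussianMonomial, pow_succ]
  ring

theorem integrable_gaussianMonomial {b : ℝ} (hb : 0 < b) (l : ℕ) :
    Integrable (gaussianMonomial b l) := by
  have hdom : Integrable (fun t : ℝ => t ^ l * Real.exp (-b * t ^ 2)) := by
    simpa [Real.rpow_natCast] using
      integrable_rpow_mul_exp_neg_mul_sq hb (s := l) (neg_one_lt_zero.trans_le l.cast_nonneg)
  refine hdom.norm.mono' (by unfold gaussianMonomial; fun_prop) (.of_forall fun t => ?_)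
  rw [gaussianMonomial, norm_mul, norm_pow, norm_mul, norm_I, one_mul, norm_real, ← ofReal_neg,
    norm_exp_ofReal, norm_mul, norm_pow, Real.norm_eq_abs, Real.norm_eq_abs,
    abs_of_pos (Real.exp_pos _), neg_mul, mul_comm]

theorem hasDerivAt_fourier_gaussianMonomial {b : ℝ} (hb : 0 < b) (l : ℕ) (w : ℝ) :
    HasDerivAt (𝓕 (gaussianMonomial b l))
      (-(2 * Real.pi) * 𝓕 (gaussianMonomial b (l + 1)) w) w := by
  have hsmul : (fun t : ℝ => t • gaussianMonomial b l t) =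
      fun t => -I * gaussianMonomial b (l + 1) t := by
    ext t
    rw [gaussianMonomial_succ, real_smul, ← mul_assoc, ← mul_assoc, neg_mul, I_mul_I]
    ring
  have h := Real.hasDerivAt_fourier (integrable_gaussianMonomial hb l)
    (hsmul ▸ (integrable_gaussianMonomial hb (l + 1)).const_mul (-I)) w
  refine h.congr_deriv ?_
  simp only [Real.fourier_real_eq_integral_exp_smul, smul_eq_mul, ← integral_const_mul,
    gaussianMonomial_succ]
  congr 1
  ext t
  ring

theorem Gfun_eq_fourier (γ σ : ℝ) (l : ℕ) (ξ : ℝ) :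
    Gfun γ σ l ξ = (((Real.exp γ - 1) / (2 * Real.pi) : ℝ) : ℂ) *
      𝓕 (gaussianMonomial (σ ^ 2 * (Real.exp γ - 1) ^ 2 / 2) l)
        ((Real.exp γ - 1) * ξ / (2 * Real.pi)) := by
  rw [Gfun, Real.fourier_real_eq_integral_exp_smul]
  congr 1
  refine integral_congr_ae (.of_forall fun t => ?_)
  simp only [gaussianMonomial, smul_eq_mul, ← mul_assoc, ← Complex.exp_add]
  congr 2
  push_cast
  field_simp
  ring

theorem hasDerivAt_Gfun {γ σ : ℝ} (hγ : γ ≠ 0) (hσ : σ ≠ 0) (l : ℕ) (ξ : ℝ) :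
    HasDerivAt (Gfun γ σ l) (-(Real.exp γ - 1) * Gfun γ σ (l + 1) ξ) ξ := by
  have ha := Real.exp_sub_one_ne_zero hγ
  have hb : 0 < σ ^ 2 * (Real.exp γ - 1) ^ 2 / 2 := by positivity
  have hinner : HasDerivAt (fun ξ : ℝ => (Real.exp γ - 1) * ξ / (2 * Real.pi))
      ((Real.exp γ - 1) / (2 * Real.pi)) ξ := by
    simpa using ((hasDerivAt_id ξ).const_mul (Real.exp γ - 1)).div_const (2 * Real.pi)
  rw [show Gfun γ σ l = _ from funext (Gfun_eq_fourier γ σ l)]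
  refine (((hasDerivAt_fourier_gaussianMonomial hb l _).scomp ξ hinner).const_mul
    _).congr_deriv ?_
  rw [Gfun_eq_fourier, real_smul]
  push_cast
  field_simp

theorem Gfun_zero_eq {γ σ : ℝ} (hγ : γ ≠ 0) (hσ : σ ≠ 0) (ξ : ℝ) :
    Gfun γ σ 0 ξ = Gfun γ σ 0 0 * (Real.exp (-(ξ ^ 2 / (2 * σ ^ 2))) : ℝ) := by
  have ha := Real.exp_sub_one_ne_zero hγ
  set b : ℂ := ((σ ^ 2 * (Real.exp γ - 1) ^ 2 / 2 : ℝ) : ℂ)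
  have hb : 0 < b.re := by rw [ofReal_re]; positivity
  have hG : ∀ ξ : ℝ, Gfun γ σ 0 ξ = (((Real.exp γ - 1) / (2 * Real.pi) : ℝ) : ℂ) *
      ((Real.pi / b) ^ (1 / 2 : ℂ) *
        cexp (-(-((Real.exp γ - 1) * ξ : ℝ) : ℂ) ^ 2 / (4 * b))) := by
    intro ξ
    rw [Gfun, ← fourierIntegral_gaussian hb]
    congr 1
    refine integral_congr_ae (.of_forall fun t => ?_)
    simp only [pow_zero, mul_one, ← Complex.exp_add, b]
    congr 1
    push_cast
    ring
  rw [hG, hG]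
  simp only [mul_zero, ofReal_zero, neg_zero, ne_eq, OfNat.ofNat_ne_zero, not_false_eq_true,
    zero_pow, zero_div, Complex.exp_zero, mul_one, mul_assoc, ofReal_exp]
  congr 3
  have hac : cexp γ - 1 ≠ 0 := by rw [← ofReal_exp]; exact_mod_cast ha
  have hσc : (σ : ℂ) ≠ 0 := ofReal_ne_zero.mpr hσ
  push_cast [b]
  field_simp
  ring

theorem Gfun_eq_hermiteVar {γ σ : ℝ} (hγ : γ ≠ 0) (hσ : σ ≠ 0) (l : ℕ) (ξ : ℝ) :
    Gfun γ σ l ξ = Gfun γ σ 0 0 * (((hermiteVar (σ ^ 2) l).eval ξ *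
      Real.exp (-(ξ ^ 2 / (2 * σ ^ 2))) / ((Real.exp γ - 1) * σ ^ 2) ^ l : ℝ) : ℂ) := by
  induction l generalizing ξ with
  | zero => simp [hermiteVar, Gfun_zero_eq hγ hσ ξ]
  | succ l ih =>
    have ha : (Real.exp γ : ℂ) - 1 ≠ 0 := by exact_mod_cast Real.exp_sub_one_ne_zero hγ
    have hG := hasDerivAt_Gfun hγ hσ l ξ
    rw [show Gfun γ σ l = _ from funext ih] at hG
    have hP := ((((hasDerivAt_hermiteVar_mul_gaussian (pow_ne_zero 2 hσ) l ξ).div_const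
      (((Real.exp γ - 1) * σ ^ 2) ^ l)).ofReal_comp).const_mul (Gfun γ σ 0 0))
    refine mul_left_cancel₀ (neg_ne_zero.mpr ha) ?_
    have hreal : ∀ y : ℝ, -y / σ ^ 2 / ((Real.exp γ - 1) * σ ^ 2) ^ l =
        -(Real.exp γ - 1) * (y / ((Real.exp γ - 1) * σ ^ 2) ^ (l + 1)) := by
      intro y
      field_simp [Real.exp_sub_one_ne_zero hγ]
      ring
    -- `G_{l+1}` is read off from the derivative of `G_l`, known by the induction hypothesis.
    rw [hG.unique hP, hreal]
    push_cast
    ring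

theorem Gfun_eq_Gfun_zero_mul {γ σ : ℝ} (hγ : γ ≠ 0) (hσ : σ ≠ 0) (l : ℕ) (ξ : ℝ) :
    Gfun γ σ l ξ = Gfun γ σ 0 ξ *
      (((((Real.exp γ - 1) * σ ^ 2) ^ l)⁻¹ * (hermiteVar (σ ^ 2) l).eval ξ : ℝ) : ℂ) := by
  rw [Gfun_eq_hermiteVar hγ hσ l, Gfun_zero_eq hγ hσ ξ]
  push_cast
  ring

theorem det_G_matrix_general (K : ℕ) (γ σ : ℝ) (hγ : 0 < γ) (hσ : 0 < σ)
    (ξ : Fin K → ℝ) :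
    Matrix.det (Matrix.of fun l j : Fin K => Gfun γ σ (l : ℕ) (ξ j)) =
      ((∏ j, Gfun γ σ 0 (ξ j)) /
          (((σ^(K*(K-1)) * (Real.exp γ - 1)^(K*(K-1)/2) : ℝ)) : ℂ)) *
        ∏ p ∈ Finset.univ.filter (fun p : Fin K × Fin K => p.1 < p.2),
          ((ξ p.2 - ξ p.1 : ℝ) : ℂ) := by
  set d := (Real.exp γ - 1) * σ ^ 2
  have hentries : (Matrix.of fun l j : Fin K => Gfun γ σ (l : ℕ) (ξ j)) =
      Matrix.of fun l j => Gfun γ σ 0 (ξ j) *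
        (ofRealHom.mapMatrix (Matrix.of fun l j : Fin K =>
          (d ^ (l : ℕ))⁻¹ * (hermiteVar (σ ^ 2) l).eval (ξ j))) l j := by
    ext l j
    exact Gfun_eq_Gfun_zero_mul hγ.ne' hσ.ne' l (ξ j)
  have hpow :
      d ^ (K * (K - 1) / 2) = σ ^ (K * (K - 1)) * (Real.exp γ - 1) ^ (K * (K - 1) / 2) := by
    rw [mul_pow, ← pow_mul, Nat.mul_div_cancel' (Nat.even_mul_pred_self K).two_dvd, mul_comm]
  rw [hentries, Matrix.det_mul_row, ← RingHom.map_det,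
    Matrix.det_mul_eval_of_monic _ _ (fun l => natDegree_hermiteVar _ l)
      (fun l => monic_hermiteVar _ l),
    Finset.prod_inv_distrib, Fin.prod_pow_val, hpow,
    Finset.prod_filter_lt_eq_prod_Ioi (fun i j => ((ξ j - ξ i : ℝ) : ℂ)), ofRealHom_eq_coe]
  push_cast
  ring

/-- for `ξ₁ ≥ … ≥ ξ_K`,
`det[G_l(ξ_j)]_{0≤l≤K−1, 1≤j≤K} = (∏_j G₀(ξ_j)) / (σ^{K(K−1)} (e^γ−1)^{K(K−1)/2}) ·
∏_{j<i} (ξ_i − ξ_j)`. -/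
theorem det_G_matrix (K : ℕ) (hK : 1 ≤ K) (γ σ : ℝ) (hγ : 0 < γ) (hσ : 0 < σ)
    (ξ : Fin K → ℝ) (hξ : ∀ i j : Fin K, i ≤ j → ξ j ≤ ξ i) :
    Matrix.det (Matrix.of fun l j : Fin K => Gfun γ σ (l : ℕ) (ξ j)) =
      ((∏ j, Gfun γ σ 0 (ξ j)) /
          (((σ^(K*(K-1)) * (Real.exp γ - 1)^(K*(K-1)/2) : ℝ)) : ℂ)) *
        ∏ p ∈ Finset.univ.filter (fun p : Fin K × Fin K => p.1 < p.2),
          ((ξ p.2 - ξ p.1 : ℝ) : ℂ) :=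
  det_G_matrix_general K γ σ hγ hσ ξ
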